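/- arXiv:1712.07086 — 2 statements merged into one kernel-verified Lean document; each statement's English description precedes it below -/
import Mathlib

section
/- Let G be a finite graph and K a clique of G. Consider the family C of all longest paths P of G such that P crosses K, P 2-touches K, and P is extreme-joined by K. Then the collection of sets {V(P) ∩ K : P ∈ C} has at most two elements; i.e., among the paths in C there are at most two pairwise K-nonequivalent paths. -/
/-!
A path of the family meets `K` in two vertices `x ≠ y` and splits there as `head ++ mid ++ tail`.
The vertices of `head` and `tail` outside `K` lie in the component of `G - K` containing the
extremes, those of `mid` in a single other component. If the middle of `Q` avoids the component
of the extremes of `P`, then, `K` being a clique, it can be spliced into `P` between `x` and `y`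
with at least one new edge, so `|mid Q| < |mid P|` as `P` is longest. Hence two nonequivalent
paths never have joined extremes; yet if `P` has the longest middle among three pairwise
nonequivalent paths, the extremes of the two others both reach the middle of `P`, hence are
joined.
-/

open SimpleGraph

/-- `p` is a longest path of `G`: it is a path, and no path of `G` is longer. -/
def IsLongestPath {V : Type*} (G : SimpleGraph V) {u v : V} (p : G.Walk u v) : Prop :=
  p.IsPath ∧ ∀ ⦃a b : V⦄ (q : G.Walk a b), q.IsPath → q.length ≤ p.length

/-- `a` and `b` lie in the same connected component of `G - S`: there is a walk from `a`
to `b` avoiding `S`. -/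
def ConnAvoiding {V : Type*} (G : SimpleGraph V) (S : Set V) (a b : V) : Prop :=
  ∃ w : G.Walk a b, ∀ x ∈ w.support, x ∉ S

/-- The path `p` crosses `S`: two of its vertices outside `S` lie in different connected
components of `G - S`. -/
def Crosses {V : Type*} (G : SimpleGraph V) (S : Set V) {u v : V} (p : G.Walk u v) : Prop :=
  ∃ a ∈ p.support, ∃ b ∈ p.support, a ∉ S ∧ b ∉ S ∧ ¬ ConnAvoiding G S a b

/-- Membership in the family `C` of Lemma 1: `P` is a longest path which contains a
vertex not in `K` and does not contain all of `K`, crosses `K`, 2-touches `K`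
(`|V(P) ∩ K| = 2`), and is extreme-joined by `K` (its extremes are not in `K` and lie
in the same component of `G - K`). -/
def InFamilyC {V : Type*} [DecidableEq V] (G : SimpleGraph V) (K : Finset V) {u v : V}
    (P : G.Walk u v) : Prop :=
  IsLongestPath G P ∧ (∃ a ∈ P.support, a ∉ K) ∧ (∃ x ∈ K, x ∉ P.support) ∧
    Crosses G (↑K) P ∧ (P.support.toFinset ∩ K).card = 2 ∧
    u ∉ K ∧ v ∉ K ∧ ConnAvoiding G (↑K) u v

namespace ConnAvoiding

variable {V : Type*} {G : SimpleGraph V} {S : Set V} {a b c : V}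

theorem symm (h : ConnAvoiding G S a b) : ConnAvoiding G S b a := by
  obtain ⟨w, hw⟩ := h
  exact ⟨w.reverse, fun x hx => hw x (by simpa using hx)⟩

theorem trans (hab : ConnAvoiding G S a b) (hbc : ConnAvoiding G S b c) :
    ConnAvoiding G S a c := by
  obtain ⟨w₁, hw₁⟩ := hab
  obtain ⟨w₂, hw₂⟩ := hbc
  refine ⟨w₁.append w₂, fun x hx => ?_⟩
  rcases (Walk.mem_support_append_iff _ _).1 hx with h | h
  exacts [hw₁ x h, hw₂ x h]

end ConnAvoiding

namespace SimpleGraph.Walk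

variable {V : Type*} {G : SimpleGraph V} {S : Set V} {u v a b p q t : V}

theorem IsPath.eq_of_mem_support_of_append {W₁ : G.Walk u v} {W₂ : G.Walk v a}
    (h : (W₁.append W₂).IsPath) (ht₁ : t ∈ W₁.support) (ht₂ : t ∈ W₂.support) : t = v := by
  by_contra htv
  exact h.ne_of_mem_support_of_append htv ht₁ ht₂ rfl

theorem IsPath.append {W₁ : G.Walk u v} {W₂ : G.Walk v a} (h₁ : W₁.IsPath) (h₂ : W₂.IsPath)
    (h : ∀ t ∈ W₁.support, t ∈ W₂.support → t = v) : (W₁.append W₂).IsPath := by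
  have hW₂ := h₂.support_nodup
  rw [← cons_tail_support, List.nodup_cons] at hW₂
  refine IsPath.mk' ?_
  rw [support_append, List.nodup_append']
  refine ⟨h₁.support_nodup, hW₂.2, fun t ht₁ ht₂ => ?_⟩
  obtain rfl := h t ht₁ (List.mem_of_mem_tail ht₂)
  exact hW₂.1 ht₂

theorem exists_eq_append_append (P : G.Walk u v) (hp : p ∈ P.support) (hq : q ∈ P.support) :
    (∃ (A : G.Walk u p) (M : G.Walk p q) (B : G.Walk q v), P = A.append (M.append B)) ∨
    (∃ (A : G.Walk u q) (M : G.Walk q p) (B : G.Walk p v), P = A.append (M.append B)) := by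
  obtain ⟨A, R, rfl⟩ := Walk.mem_support_iff_exists_append.1 hp
  rcases (mem_support_append_iff _ _).1 hq with hqA | hqR
  · obtain ⟨A', M, rfl⟩ := Walk.mem_support_iff_exists_append.1 hqA
    exact Or.inr ⟨A', M, R, (append_assoc _ _ _).symm⟩
  · obtain ⟨M, B, rfl⟩ := Walk.mem_support_iff_exists_append.1 hqR
    exact Or.inl ⟨A, M, B, rfl⟩

theorem IsPath.connAvoiding_start {W : G.Walk a b} (hW : W.IsPath)
    (hWS : ∀ k ∈ W.support, k ∈ S → k = b) (ht : t ∈ W.support) (htS : t ∉ S) :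
    ConnAvoiding G S a t := by
  obtain ⟨W₁, W₂, rfl⟩ := Walk.mem_support_iff_exists_append.1 ht
  refine ⟨W₁, fun k hk hkS => htS ?_⟩
  obtain rfl := hWS k ((mem_support_append_iff _ _).2 (Or.inl hk)) hkS
  rwa [← hW.eq_of_mem_support_of_append hk W₂.end_mem_support]

theorem IsPath.connAvoiding_of_mem {W : G.Walk a b} (hW : W.IsPath)
    (hWS : ∀ k ∈ W.support, k ∈ S → k = a ∨ k = b) {s : V}
    (ht : t ∈ W.support) (htS : t ∉ S) (hs : s ∈ W.support) (hsS : s ∉ S) :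
    ConnAvoiding G S t s := by
  obtain ⟨W₁, W₂, rfl⟩ := Walk.mem_support_iff_exists_append.1 ht
  have hW₁S : ∀ k ∈ W₁.support, k ∈ S → k = a := fun k hk hkS => by
    refine (hWS k ((mem_support_append_iff _ _).2 (Or.inl hk)) hkS).resolve_right ?_
    rintro rfl
    exact htS (hW.eq_of_mem_support_of_append hk W₂.end_mem_support ▸ hkS)
  have hW₂S : ∀ k ∈ W₂.support, k ∈ S → k = b := fun k hk hkS => by
    refine (hWS k ((mem_support_append_iff _ _).2 (Or.inr hk)) hkS).resolve_left ?_
    rintro rfl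
    exact htS (hW.eq_of_mem_support_of_append W₁.start_mem_support hk ▸ hkS)
  rcases (mem_support_append_iff _ _).1 hs with hs | hs
  · exact hW.of_append_left.reverse.connAvoiding_start (by simpa using hW₁S) (by simpa using hs)
      hsS
  · exact hW.of_append_right.connAvoiding_start hW₂S hs hsS

theorem IsPath.exists_extend_start {W : G.Walk p q} (hW : W.IsPath)
    (h : a = p ∨ G.Adj a p ∧ a ∉ W.support) :
    ∃ W' : G.Walk a q, W'.IsPath ∧ W.length ≤ W'.length ∧ (a ≠ p → W.length < W'.length) ∧
      W'.support ⊆ a :: W.support := by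
  rcases h with rfl | ⟨hadj, ha⟩
  · exact ⟨W, hW, le_rfl, fun h => (h rfl).elim, List.subset_cons_self _ _⟩
  · exact ⟨cons hadj W, hW.cons ha, by simp, fun _ => by simp, by simp⟩

end SimpleGraph.Walk

namespace SimpleGraph.IsClique

variable {V : Type*} {G : SimpleGraph V} {S : Set V} {a b p q : V}

theorem exists_longer_isPath_of_ne (hS : G.IsClique S) {W : G.Walk p q} (hW : W.IsPath)
    (hWS : ∀ t ∈ W.support, t ∈ S → t = p ∨ t = q) (hp : p ∈ S) (hq : q ∈ S) (ha : a ∈ S)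
    (hb : b ∈ S) (hab : a ≠ b) (hpb : p ≠ b) (hqa : q ≠ a) (hne : a ≠ p ∨ b ≠ q) :
    ∃ W' : G.Walk a b, W'.IsPath ∧ W.length < W'.length ∧
      ∀ t ∈ W'.support, t ∈ W.support ∨ t = a ∨ t = b := by
  obtain ⟨W₁, hW₁, hle₁, hlt₁, hsub₁⟩ := hW.exists_extend_start (a := a) <| by
    refine or_iff_not_imp_left.2 fun hap => ⟨hS ha hp hap, fun haW => ?_⟩
    rcases hWS a haW ha with h | h
    exacts [hap h, hqa h.symm]
  obtain ⟨W₂, hW₂, hle₂, hlt₂, hsub₂⟩ := hW₁.reverse.exists_extend_start (a := b) <| by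
    refine or_iff_not_imp_left.2 fun hbq => ⟨hS hb hq hbq, fun hbW => ?_⟩
    rcases List.mem_cons.1 (hsub₁ (by simpa using hbW)) with h | h
    · exact hab h.symm
    · rcases hWS b h hb with h | h
      exacts [hpb h.symm, hbq h]
  refine ⟨W₂.reverse, hW₂.reverse, ?_, fun t ht => ?_⟩
  · simp only [Walk.length_reverse] at hle₂ hlt₂ ⊢
    rcases hne with hap | hbq
    exacts [(hlt₁ hap).trans_le hle₂, hle₁.trans_lt (hlt₂ hbq)]
  · rw [Walk.support_reverse, List.mem_reverse] at ht
    rcases List.mem_cons.1 (hsub₂ ht) with rfl | ht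
    · exact Or.inr (Or.inr rfl)
    · rcases List.mem_cons.1 (hsub₁ (by simpa using ht)) with rfl | ht
      exacts [Or.inr (Or.inl rfl), Or.inl ht]

theorem exists_longer_isPath (hS : G.IsClique S) {W : G.Walk p q} (hW : W.IsPath)
    (hWS : ∀ t ∈ W.support, t ∈ S → t = p ∨ t = q) (hp : p ∈ S) (hq : q ∈ S) (ha : a ∈ S)
    (hb : b ∈ S) (hpq : p ≠ q) (hab : a ≠ b) (hne : ({p, q} : Set V) ≠ {a, b}) :
    ∃ W' : G.Walk a b, W'.IsPath ∧ W.length < W'.length ∧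
      ∀ t ∈ W'.support, t ∈ W.support ∨ t = a ∨ t = b := by
  rw [Ne, Set.pair_eq_pair_iff, not_or, not_and_or, not_and_or] at hne
  by_cases horient : p ≠ b ∧ q ≠ a
  · exact hS.exists_longer_isPath_of_ne hW hWS hp hq ha hb hab horient.1 horient.2
      (by tauto)
  · obtain ⟨W', hW', hlen, hsub⟩ := hS.exists_longer_isPath_of_ne hW.reverse
      (by simpa [or_comm] using hWS) hq hp ha hb hab (by grind) (by grind) (by grind)
    exact ⟨W', hW', by simpa using hlen, by simpa using hsub⟩

end SimpleGraph.IsClique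

theorem IsLongestPath.length_le_of_replace {V : Type*} {G : SimpleGraph V} {u v a b : V}
    {A : G.Walk u a} {M M' : G.Walk a b} {B : G.Walk b v}
    (hP : IsLongestPath G (A.append (M.append B))) (hM' : M'.IsPath)
    (hA : ∀ t ∈ A.support, t ∈ M'.support → t = a)
    (hB : ∀ t ∈ B.support, t ∈ M'.support → t = b) : M'.length ≤ M.length := by
  have hMB := hP.1.of_append_right
  have hM'B : (M'.append B).IsPath := hM'.append hMB.of_append_right fun t ht₁ ht₂ => hB t ht₂ ht₁
  have hN : (A.append (M'.append B)).IsPath := by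
    refine hP.1.of_append_left.append hM'B fun t htA ht => ?_
    rcases (Walk.mem_support_append_iff _ _).1 ht with ht | ht
    · exact hA t htA ht
    · exact hP.1.eq_of_mem_support_of_append htA
        ((Walk.mem_support_append_iff _ _).2 (Or.inr ht))
  have := hP.2 _ hN
  simp only [Walk.length_append] at this
  omega

/-- A path of the family `C`, split at its two vertices in `S`. -/
structure TwoTouchSplit {V : Type*} (G : SimpleGraph V) (S : Set V) where
  {u v x y : V}
  head : G.Walk u x
  mid : G.Walk x y
  tail : G.Walk y v
  isLongestPath : IsLongestPath G (head.append (mid.append tail))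
  x_mem : x ∈ S
  y_mem : y ∈ S
  x_ne_y : x ≠ y
  eq_of_mem : ∀ t ∈ (head.append (mid.append tail)).support, t ∈ S → t = x ∨ t = y
  joined : ConnAvoiding G S u v
  crosses : Crosses G S (head.append (mid.append tail))

namespace TwoTouchSplit

variable {V : Type*} {G : SimpleGraph V} {S : Set V} (s : TwoTouchSplit G S) {t : V}

theorem isPath : (s.head.append (s.mid.append s.tail)).IsPath := s.isLongestPath.1

theorem eq_x_of_mem_head (ht : t ∈ s.head.support) (htS : t ∈ S) : t = s.x := by
  refine (s.eq_of_mem t ((Walk.mem_support_append_iff _ _).2 (Or.inl ht)) htS).resolve_right ?_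
  rintro rfl
  exact s.x_ne_y (s.isPath.eq_of_mem_support_of_append ht
    ((Walk.mem_support_append_iff _ _).2 (Or.inl s.mid.end_mem_support))).symm

theorem eq_y_of_mem_tail (ht : t ∈ s.tail.support) (htS : t ∈ S) : t = s.y := by
  refine (s.eq_of_mem t ((Walk.mem_support_append_iff _ _).2
    (Or.inr ((Walk.mem_support_append_iff _ _).2 (Or.inr ht)))) htS).resolve_left ?_
  rintro rfl
  have hP := s.isPath
  rw [Walk.append_assoc] at hP
  exact s.x_ne_y (hP.eq_of_mem_support_of_append
    ((Walk.mem_support_append_iff _ _).2 (Or.inl s.head.end_mem_support)) ht)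

theorem eq_of_mem_mid (ht : t ∈ s.mid.support) (htS : t ∈ S) : t = s.x ∨ t = s.y :=
  s.eq_of_mem t ((Walk.mem_support_append_iff _ _).2
    (Or.inr ((Walk.mem_support_append_iff _ _).2 (Or.inl ht)))) htS

theorem isPath_mid : s.mid.IsPath := s.isPath.of_append_right.of_append_left

theorem connAvoiding_of_mem_head (ht : t ∈ s.head.support) (htS : t ∉ S) :
    ConnAvoiding G S s.u t :=
  s.isPath.of_append_left.connAvoiding_start (fun _ hk hkS => s.eq_x_of_mem_head hk hkS) ht htS

theorem connAvoiding_of_mem_tail (ht : t ∈ s.tail.support) (htS : t ∉ S) :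
    ConnAvoiding G S s.u t :=
  s.joined.trans <| s.isPath.of_append_right.of_append_right.reverse.connAvoiding_start
    (fun _ hk hkS => s.eq_y_of_mem_tail (by simpa using hk) hkS) (by simpa using ht) htS

theorem connAvoiding_of_mem_mid {t' : V} (ht : t ∈ s.mid.support) (htS : t ∉ S)
    (ht' : t' ∈ s.mid.support) (ht'S : t' ∉ S) : ConnAvoiding G S t t' :=
  s.isPath_mid.connAvoiding_of_mem (fun _ hk hkS => s.eq_of_mem_mid hk hkS) ht htS ht' ht'S

/-- The crossing happens in the middle, as head and tail are joined to the extremes. -/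
theorem not_connAvoiding_of_mem_mid (ht : t ∈ s.mid.support) (htS : t ∉ S) :
    ¬ ConnAvoiding G S s.u t := by
  intro hut
  have hall : ∀ z ∈ (s.head.append (s.mid.append s.tail)).support, z ∉ S →
      ConnAvoiding G S s.u z := by
    intro z hz hzS
    rcases (Walk.mem_support_append_iff _ _).1 hz with hz | hz
    · exact s.connAvoiding_of_mem_head hz hzS
    rcases (Walk.mem_support_append_iff _ _).1 hz with hz | hz
    · exact hut.trans (s.connAvoiding_of_mem_mid ht htS hz hzS)
    · exact s.connAvoiding_of_mem_tail hz hzS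
  obtain ⟨a, ha, b, hb, haS, hbS, hab⟩ := s.crosses
  exact hab ((hall a ha haS).symm.trans (hall b hb hbS))

variable (hS : G.IsClique S)
include hS

/-- The middle of `c`, rerouted through the clique `S`, replaces the middle of `d`. -/
theorem length_mid_lt (c d : TwoTouchSplit G S) (hne : ({c.x, c.y} : Set V) ≠ {d.x, d.y})
    (hsep : ∀ t ∈ c.mid.support, t ∉ S → ¬ ConnAvoiding G S d.u t) :
    c.mid.length < d.mid.length := by
  obtain ⟨M, hM, hlt, hMsub⟩ := hS.exists_longer_isPath c.isPath_mid
    (fun _ hk hkS => c.eq_of_mem_mid hk hkS) c.x_mem c.y_mem d.x_mem d.y_mem c.x_ne_y d.x_ne_y hne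
  have mem_of_connAvoiding : ∀ t ∈ M.support, ConnAvoiding G S d.u t → t ∈ S := fun t ht hdt => by
    by_contra htS
    rcases hMsub t ht with htc | rfl | rfl
    exacts [hsep t htc htS hdt, htS d.x_mem, htS d.y_mem]
  refine hlt.trans_le (d.isLongestPath.length_le_of_replace hM (fun t ht htM => ?_)
    (fun t ht htM => ?_))
  · by_cases htS : t ∈ S
    exacts [d.eq_x_of_mem_head ht htS,
      absurd (mem_of_connAvoiding t htM (d.connAvoiding_of_mem_head ht htS)) htS]
  · by_cases htS : t ∈ S
    exacts [d.eq_y_of_mem_tail ht htS,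
      absurd (mem_of_connAvoiding t htM (d.connAvoiding_of_mem_tail ht htS)) htS]

theorem not_connAvoiding_u_u (c d : TwoTouchSplit G S)
    (hne : ({c.x, c.y} : Set V) ≠ {d.x, d.y}) : ¬ ConnAvoiding G S c.u d.u := by
  intro hcd
  have hlt := length_mid_lt hS c d hne fun t ht htS hdt =>
    c.not_connAvoiding_of_mem_mid ht htS (hcd.trans hdt)
  have hgt := length_mid_lt hS d c (Ne.symm hne) fun t ht htS hct =>
    d.not_connAvoiding_of_mem_mid ht htS (hcd.symm.trans hct)
  omega

theorem exists_mem_mid_connAvoiding (c d : TwoTouchSplit G S)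
    (hne : ({c.x, c.y} : Set V) ≠ {d.x, d.y}) (hle : d.mid.length ≤ c.mid.length) :
    ∃ t ∈ c.mid.support, t ∉ S ∧ ConnAvoiding G S d.u t := by
  by_contra! h
  exact (length_mid_lt hS c d hne h).not_ge hle

theorem false_of_length_mid_le (c d e : TwoTouchSplit G S)
    (hcd : ({c.x, c.y} : Set V) ≠ {d.x, d.y}) (hce : ({c.x, c.y} : Set V) ≠ {e.x, e.y})
    (hde : ({d.x, d.y} : Set V) ≠ {e.x, e.y}) (hd : d.mid.length ≤ c.mid.length)
    (he : e.mid.length ≤ c.mid.length) : False := by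
  obtain ⟨t, ht, htS, hdt⟩ := exists_mem_mid_connAvoiding hS c d hcd hd
  obtain ⟨t', ht', ht'S, het'⟩ := exists_mem_mid_connAvoiding hS c e hce he
  exact not_connAvoiding_u_u hS d e hde
    (hdt.trans ((c.connAvoiding_of_mem_mid ht htS ht' ht'S).trans het'.symm))

theorem pair_eq_or_pair_eq_or_pair_eq (c d e : TwoTouchSplit G S) :
    ({c.x, c.y} : Set V) = {d.x, d.y} ∨ ({c.x, c.y} : Set V) = {e.x, e.y} ∨
      ({d.x, d.y} : Set V) = {e.x, e.y} := by
  by_contra! ⟨hcd, hce, hde⟩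
  by_cases hc : d.mid.length ≤ c.mid.length ∧ e.mid.length ≤ c.mid.length
  · exact false_of_length_mid_le hS c d e hcd hce hde hc.1 hc.2
  by_cases hd : c.mid.length ≤ d.mid.length ∧ e.mid.length ≤ d.mid.length
  · exact false_of_length_mid_le hS d c e hcd.symm hde hce hd.1 hd.2
  exact false_of_length_mid_le hS e c d hce.symm hde.symm hcd (by omega) (by omega)

end TwoTouchSplit

theorem InFamilyC.exists_twoTouchSplit {V : Type*} [DecidableEq V] {G : SimpleGraph V}
    {K : Finset V} {u v : V} {P : G.Walk u v} (hP : InFamilyC G K P) :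
    ∃ s : TwoTouchSplit G K, ((P.support.toFinset ∩ K : Finset V) : Set V) = {s.x, s.y} := by
  obtain ⟨hlong, -, -, hcross, hcard, -, -, huv⟩ := hP
  obtain ⟨x, y, hxy, hPK⟩ := Finset.card_eq_two.1 hcard
  have hmem : ∀ t, t ∈ P.support ∧ t ∈ K ↔ t = x ∨ t = y := fun t => by
    simpa using Finset.ext_iff.1 hPK t
  have hxP := ((hmem x).2 (Or.inl rfl)).1
  have hyP := ((hmem y).2 (Or.inr rfl)).1
  have hxK := ((hmem x).2 (Or.inl rfl)).2
  have hyK := ((hmem y).2 (Or.inr rfl)).2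
  rw [hPK, Finset.coe_pair]
  rcases P.exists_eq_append_append hxP hyP with ⟨A, M, B, rfl⟩ | ⟨A, M, B, rfl⟩
  · exact ⟨⟨A, M, B, hlong, hxK, hyK, hxy, fun t ht htK => (hmem t).1 ⟨ht, htK⟩, huv, hcross⟩,
      rfl⟩
  · exact ⟨⟨A, M, B, hlong, hyK, hxK, hxy.symm, fun t ht htK => ((hmem t).1 ⟨ht, htK⟩).symm,
      huv, hcross⟩, Set.pair_comm _ _⟩

theorem at_most_two_nonequivalent_extreme_joined_general {V : Type*} [DecidableEq V]
    (G : SimpleGraph V) (K : Finset V) (hK : G.IsClique (↑K))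
    ⦃u₁ v₁ u₂ v₂ u₃ v₃ : V⦄ (P : G.Walk u₁ v₁) (Q : G.Walk u₂ v₂) (R : G.Walk u₃ v₃)
    (hP : InFamilyC G K P) (hQ : InFamilyC G K Q) (hR : InFamilyC G K R) :
    P.support.toFinset ∩ K = Q.support.toFinset ∩ K ∨
    P.support.toFinset ∩ K = R.support.toFinset ∩ K ∨
    Q.support.toFinset ∩ K = R.support.toFinset ∩ K := by
  obtain ⟨c, hc⟩ := hP.exists_twoTouchSplit
  obtain ⟨d, hd⟩ := hQ.exists_twoTouchSplit
  obtain ⟨e, he⟩ := hR.exists_twoTouchSplit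
  simp only [← Finset.coe_inj, hc, hd, he]
  exact TwoTouchSplit.pair_eq_or_pair_eq_or_pair_eq hK c d e

/-- Among the longest paths of `G` that cross a clique `K`, 2-touch `K`, and are
extreme-joined by `K`, there are at most two pairwise `K`-nonequivalent paths: among
any three such paths, two of them intersect `K` in the same set of vertices. -/
theorem at_most_two_nonequivalent_extreme_joined {V : Type*} [Fintype V] [DecidableEq V]
    (G : SimpleGraph V) (K : Finset V) (hK : G.IsClique (↑K))
    ⦃u₁ v₁ u₂ v₂ u₃ v₃ : V⦄ (P : G.Walk u₁ v₁) (Q : G.Walk u₂ v₂) (R : G.Walk u₃ v₃)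
    (hP : InFamilyC G K P) (hQ : InFamilyC G K Q) (hR : InFamilyC G K R) :
    P.support.toFinset ∩ K = Q.support.toFinset ∩ K ∨
    P.support.toFinset ∩ K = R.support.toFinset ∩ K ∨
    Q.support.toFinset ∩ K = R.support.toFinset ∩ K :=
  at_most_two_nonequivalent_extreme_joined_general G K hK (u₁ := u₁) (v₁ := v₁) (u₂ := u₂)
    (v₂ := v₂) (u₃ := u₃) (v₃ := v₃) P Q R hP hQ hR
end

section
/- Let G = (X, Y, E) be a finite bipartite permutation graph and let P be any path in G. Then there exists an ordered path Q in G with the same vertex set as P, i.e., V(Q) = V(P). -/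
open SimpleGraph

/-- A line representation of a bipartite graph `G` on `Fin n ⊕ Fin m` (left part
`X = {x_1 < ⋯ < x_n}`, right part `Y = {y_1 < ⋯ < y_m}`), witnessing that `G` is a
bipartite permutation graph: points `r i` (for `x i`) and `s j` (for `y j`) on a first
line, and points `σr i`, `σs j` on a second line, strictly increasing on each part and
pairwise distinct across parts, such that `x i` and `y j` are adjacent iff the
corresponding segments cross, i.e. `(r i - s j) * (σr i - σs j) < 0`; there are no edges
within `X` nor within `Y`. -/
structure LineRep (n m : ℕ) (G : SimpleGraph (Fin n ⊕ Fin m)) where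
  r : Fin n → ℝ
  s : Fin m → ℝ
  σr : Fin n → ℝ
  σs : Fin m → ℝ
  r_mono : StrictMono r
  s_mono : StrictMono s
  σr_mono : StrictMono σr
  σs_mono : StrictMono σs
  top_distinct : ∀ i j, r i ≠ s j
  bot_distinct : ∀ i j, σr i ≠ σs j
  adj_iff : ∀ i j, G.Adj (Sum.inl i) (Sum.inr j) ↔ (r i - s j) * (σr i - σs j) < 0
  no_left : ∀ i i', ¬ G.Adj (Sum.inl i) (Sum.inl i')
  no_right : ∀ j j', ¬ G.Adj (Sum.inr j) (Sum.inr j')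

/-- A path in a bipartite graph on `Fin n ⊕ Fin m` is ordered if its vertices alternate
between the two parts and, within each part, appear in strictly increasing index order.
-/
def OrderedWalk {n m : ℕ} (G : SimpleGraph (Fin n ⊕ Fin m)) {u v : Fin n ⊕ Fin m}
    (p : G.Walk u v) : Prop :=
  List.Chain' (fun a b : Fin n ⊕ Fin m => a.isLeft ≠ b.isLeft) p.support ∧
  (p.support.filterMap Sum.getLeft?).Pairwise (· < ·) ∧
  (p.support.filterMap Sum.getRight?).Pairwise (· < ·)

/-!
Let `a₁ < ⋯ < a_k` and `b₁ < ⋯ < b_l` be the vertices of `P` in `X` and in `Y`. As `P`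
alternates between the sides, `|k - l| ≤ 1`, and an ordered path on these vertices is
`a₁ b₁ a₂ b₂ ⋯` or `b₁ a₁ b₂ a₂ ⋯`; so it is enough to show that the consecutive pairs of one of
these interleavings are edges.

In a line representation, two edges `x y` and `x' y'` with `x' ≤ x` and `y ≤ y'` force every
pair of the box `[x', x] × [y, y']` to be an edge. So `a_i b_j` is an edge once there are edges
`x y` with `a_i ≤ x`, `y ≤ b_j` and with `x ≤ a_i`, `b_j ≤ y`. If there is no edge of the first
kind, `I = {x ≥ a_i} ∪ {y ≤ b_j}` is independent. Along a path alternating between the sides, the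
vertices of `I ∩ Y` are separated by vertices of `X \ I`, so `|I ∩ P| < |X ∩ P| + e`, where `e`
counts the endpoints of `P` in `I ∩ Y`, and symmetrically. As `|I ∩ P| = (k - i + 1) + j`, this is
impossible for the pairs `(a_i, b_i)`, and for `(a_{i+1}, b_i)` when `k = l + 1`; when `k = l` it
locates the endpoints of `P` and shows that one of the two interleavings works.
-/

open List

namespace List

variable {α β : Type*}

theorem filterMap_interleave_of_right {f : α → Option β} {xs ys : List α}
    (h : ∀ y ∈ ys, f y = none) : (xs.interleave ys).filterMap f = xs.filterMap f :=
  ((left_sublist_interleave.filterMap f).eq_of_length (by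
    simpa [length_filterMap_eq_countP] using h)).symm

theorem filterMap_interleave_of_left {f : α → Option β} {xs ys : List α}
    (h : ∀ x ∈ xs, f x = none) : (xs.interleave ys).filterMap f = ys.filterMap f :=
  ((right_sublist_interleave.filterMap f).eq_of_length (by
    simpa [length_filterMap_eq_countP] using h)).symm

theorem isChain_interleave {R : α → α → Prop} :
    ∀ {xs ys : List α}, ys.length ≤ xs.length → xs.length ≤ ys.length + 1 →
      (∀ x y, (x, y) ∈ zip xs ys → R x y) → (∀ y x, (y, x) ∈ zip ys xs.tail → R y x) →
      (xs.interleave ys).IsChain R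
  | [], _, hl, _, _, _ => by simp_all
  | [_], [], _, _, _, _ => by simp
  | _ :: _ :: _, [], _, hl, _, _ => by simp at hl
  | [x], [y], _, _, h₁, _ => by simpa using h₁ x y (by simp)
  | [_], _ :: _ :: _, hl, _, _, _ => by simp at hl
  | x :: x' :: xs, y :: ys, hl, hl', h₁, h₂ => by
    have ih := isChain_interleave (xs := x' :: xs) (ys := ys) (by simpa using hl)
      (by simpa using hl') (fun a b h => h₁ a b (by simp [h]))
      (fun b a h => h₂ b a (by simp_all))
    simp only [cons_interleave] at ih ⊢
    exact .cons_cons (h₁ x y (by simp)) (.cons_cons (h₂ y x' (by simp)) ih)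

theorem countP_sumElim (l : List (α ⊕ β)) (p : α → Bool) (q : β → Bool) :
    l.countP (Sum.elim p q) =
      (l.filterMap Sum.getLeft?).countP p + (l.filterMap Sum.getRight?).countP q := by
  induction l with
  | nil => rfl
  | cons v l ih => cases v <;> simp [filterMap_cons, countP_cons, ih] <;> ac_rfl

theorem countP_isLeft (l : List (α ⊕ β)) :
    l.countP Sum.isLeft = (l.filterMap Sum.getLeft?).length := by
  have : Sum.isLeft = Sum.elim (fun _ : α => true) (fun _ : β => false) := by
    funext v; cases v <;> rfl
  simpa [this] using countP_sumElim l (fun _ => true) (fun _ => false)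

theorem countP_isRight (l : List (α ⊕ β)) :
    l.countP Sum.isRight = (l.filterMap Sum.getRight?).length := by
  have : Sum.isRight = Sum.elim (fun _ : α => false) (fun _ : β => true) := by
    funext v; cases v <;> rfl
  simpa [this] using countP_sumElim l (fun _ => false) (fun _ => true)

section LinearOrder

variable [LinearOrder α]

theorem countP_le_eq_countP_lt_add_count (l : List α) (x : α) :
    l.countP (· ≤ x) = l.countP (· < x) + l.count x := by
  induction l with
  | nil => rfl
  | cons a l ih =>
    rcases lt_trichotomy a x with h | rfl | h
    · simp [ih, h, h.le, h.ne]; omega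
    · simp [ih]; omega
    · simp [ih, not_le.2 h, not_lt.2 h.le, h.ne']

theorem countP_lt_add_countP_le (l : List α) (x : α) :
    l.countP (· < x) + l.countP (x ≤ ·) = l.length := by
  simpa using (length_eq_countP_add_countP (· < x) (l := l)).symm

theorem pairwise_lt_mergeSort {l : List α} (hl : l.Nodup) :
    (l.mergeSort (· ≤ ·)).Pairwise (· < ·) :=
  ((pairwise_mergeSort' (· ≤ ·) l).and ((mergeSort_perm l _).nodup_iff.2 hl)).imp
    fun h => lt_of_le_of_ne h.1 h.2

variable [LinearOrder β]

theorem countP_lt_eq_of_mem_zip : ∀ {xs : List α} {ys : List β} {x : α} {y : β},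
    xs.Pairwise (· < ·) → ys.Pairwise (· < ·) → (x, y) ∈ zip xs ys →
      xs.countP (· < x) = ys.countP (· < y)
  | [], _, _, _, _, _, h => by simp at h
  | _ :: _, [], _, _, _, _, h => by simp at h
  | a :: xs, b :: ys, x, y, hxs, hys, h => by
    rw [pairwise_cons] at hxs hys
    rw [zip_cons_cons, mem_cons] at h
    rcases h with h | h
    · obtain ⟨rfl, rfl⟩ := Prod.mk.inj h
      have hx : xs.countP (· < x) = 0 :=
        countP_eq_zero.2 fun z hz => by simpa using (hxs.1 z hz).le
      have hy : ys.countP (· < y) = 0 :=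
        countP_eq_zero.2 fun z hz => by simpa using (hys.1 z hz).le
      simp [hx, hy]
    · have hx := hxs.1 x (of_mem_zip h).1
      have hy := hys.1 y (of_mem_zip h).2
      simp [hx, hy, countP_lt_eq_of_mem_zip hxs.2 hys.2 h]

theorem countP_lt_eq_add_one_of_mem_zip_tail {xs : List α} {ys : List β} {x : α} {y : β}
    (hxs : xs.Pairwise (· < ·)) (hys : ys.Pairwise (· < ·)) (h : (x, y) ∈ zip xs ys.tail) :
    ys.countP (· < y) = xs.countP (· < x) + 1 := by
  cases ys with
  | nil => simp at h
  | cons b ys =>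
    rw [pairwise_cons] at hys
    simp [hys.1 y (of_mem_zip h).2, countP_lt_eq_of_mem_zip hxs hys.2 h]

end LinearOrder

end List

namespace SimpleGraph.Walk

variable {V : Type*} {G : SimpleGraph V} {c : V → Bool}

theorem countP_support_add_one (hc : ∀ ⦃v w⦄, G.Adj v w → c v ≠ c w) :
    ∀ {u v : V} (p : G.Walk u v),
      p.support.countP c + 1 = p.support.countP (!c ·) + [u, v].countP c
  | u, _, nil => by cases h : c u <;> simp [h]
  | u, v, cons (v := w) h p => by
    have ih := countP_support_add_one hc p
    have huw := hc h
    simp only [support_cons, countP_cons] at ih ⊢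
    cases hu : c u <;> cases hw : c w <;> simp_all <;> omega

variable {I : V → Bool}

/-- `#c - #I + #{endpoints in I \ c}` does not decrease when a vertex is prepended to the walk,
since a start in `I \ c` is then preceded by a vertex of `c \ I`. -/
theorem countP_support_add_toNat_le (hc : ∀ ⦃v w⦄, G.Adj v w → c v ≠ c w)
    (hI : ∀ ⦃v w⦄, G.Adj v w → I v → I w → False) :
    ∀ {u v : V} (p : G.Walk u v),
      p.support.countP I + (I u != c u || p.support.any fun w => I w && !c w).toNat ≤
        p.support.countP c + [u, v].countP (fun w => I w && !c w)
  | u, _, nil => by cases h : c u <;> cases h' : I u <;> simp [h, h']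
  | u, v, cons (v := w) h p => by
    have ih := countP_support_add_toNat_le hc hI p
    have huw := hc h
    have hIuw := hI h
    simp only [support_cons, countP_cons, any_cons] at ih ⊢
    generalize p.support.any (fun w => I w && !c w) = E at ih ⊢
    cases E <;> cases hu : c u <;> cases hw : c w <;> cases hIu : I u <;> cases hIw : I w <;>
      simp_all <;> omega

theorem countP_support_add_one_le (hc : ∀ ⦃v w⦄, G.Adj v w → c v ≠ c w)
    (hI : ∀ ⦃v w⦄, G.Adj v w → I v → I w → False) {u v : V} (p : G.Walk u v)
    (hp : ∃ w ∈ p.support, I w ∧ !c w) :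
    p.support.countP I + 1 ≤ p.support.countP c + [u, v].countP (fun w => I w && !c w) := by
  have hany : p.support.any (fun w => I w && !c w) := by simpa using hp
  simpa [hany] using countP_support_add_toNat_le hc hI p

end SimpleGraph.Walk

section Bipartite

variable {α β : Type*} {G : SimpleGraph (α ⊕ β)}

theorem isLeft_ne_of_adj (hG : G ≤ completeBipartiteGraph α β) ⦃v w : α ⊕ β⦄
    (h : G.Adj v w) : v.isLeft ≠ w.isLeft := by
  have := hG h
  cases v <;> cases w <;> simp_all [completeBipartiteGraph]

theorem isRight_ne_of_adj (hG : G ≤ completeBipartiteGraph α β) ⦃v w : α ⊕ β⦄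
    (h : G.Adj v w) : v.isRight ≠ w.isRight := by
  have := hG h
  cases v <;> cases w <;> simp_all [completeBipartiteGraph]

theorem exists_isChain_interleave {as : List α} {bs : List β}
    (hzip : ∀ x y, (x, y) ∈ zip as bs → G.Adj (.inl x) (.inr y))
    (h : (bs.length ≤ as.length ∧ as.length ≤ bs.length + 1 ∧
        ∀ y x, (y, x) ∈ zip bs as.tail → G.Adj (.inl x) (.inr y)) ∨
      (as.length ≤ bs.length ∧ bs.length ≤ as.length + 1 ∧
        ∀ x y, (x, y) ∈ zip as bs.tail → G.Adj (.inl x) (.inr y))) :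
    ∃ C : List (α ⊕ β), C.IsChain G.Adj ∧ C ~ as.map .inl ++ bs.map .inr ∧
      C.filterMap Sum.getLeft? = as ∧ C.filterMap Sum.getRight? = bs := by
  rcases h with ⟨h₁, h₂, h₃⟩ | ⟨h₁, h₂, h₃⟩
  · refine ⟨(as.map .inl).interleave (bs.map .inr), isChain_interleave (by simpa) (by simpa)
      ?_ ?_, interleave_perm_append, ?_, ?_⟩
    · simp only [zip_map, mem_map, Prod.exists, Prod.map, Prod.mk.injEq]
      rintro _ _ ⟨x, y, hxy, rfl, rfl⟩
      exact hzip x y hxy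
    · simp only [← map_tail, zip_map, mem_map, Prod.exists, Prod.map, Prod.mk.injEq]
      rintro _ _ ⟨y, x, hyx, rfl, rfl⟩
      exact (h₃ y x hyx).symm
    · rw [filterMap_interleave_of_right (by simp)]; simp [filterMap_map, Function.comp_def]
    · rw [filterMap_interleave_of_left (by simp)]; simp [filterMap_map, Function.comp_def]
  · refine ⟨(bs.map .inr).interleave (as.map .inl), isChain_interleave (by simpa) (by simpa)
      ?_ ?_, interleave_perm_append.trans perm_append_comm, ?_, ?_⟩
    · simp only [zip_map, mem_map, Prod.exists, Prod.map, Prod.mk.injEq]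
      rintro _ _ ⟨y, x, hyx, rfl, rfl⟩
      rw [← zip_swap, mem_map] at hyx
      obtain ⟨_, hxy, hswap⟩ := hyx
      cases hswap
      exact (hzip _ _ hxy).symm
    · simp only [← map_tail, zip_map, mem_map, Prod.exists, Prod.map, Prod.mk.injEq]
      rintro _ _ ⟨x, y, hxy, rfl, rfl⟩
      exact h₃ x y hxy
    · rw [filterMap_interleave_of_left (by simp)]; simp [filterMap_map, Function.comp_def]
    · rw [filterMap_interleave_of_right (by simp)]; simp [filterMap_map, Function.comp_def]

namespace SimpleGraph.Walk

variable {u v : α ⊕ β}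

def lefts (p : G.Walk u v) : List α := p.support.filterMap Sum.getLeft?

def rights (p : G.Walk u v) : List β := p.support.filterMap Sum.getRight?

theorem mem_lefts {p : G.Walk u v} {x : α} : x ∈ p.lefts ↔ .inl x ∈ p.support := by
  simp [lefts, mem_filterMap]

theorem mem_rights {p : G.Walk u v} {y : β} : y ∈ p.rights ↔ .inr y ∈ p.support := by
  simp [rights, mem_filterMap]

theorem IsPath.nodup_lefts {p : G.Walk u v} (hp : p.IsPath) : p.lefts.Nodup :=
  hp.support_nodup.filterMap fun a a' b ha ha' => by cases a <;> cases a' <;> simp_all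

theorem IsPath.nodup_rights {p : G.Walk u v} (hp : p.IsPath) : p.rights.Nodup :=
  hp.support_nodup.filterMap fun a a' b ha ha' => by cases a <;> cases a' <;> simp_all

theorem length_lefts_add_one (hG : G ≤ completeBipartiteGraph α β) (p : G.Walk u v) :
    p.lefts.length + 1 = p.rights.length + [u, v].countP Sum.isLeft := by
  have := countP_support_add_one (isLeft_ne_of_adj hG) p
  have hnot : (fun w : α ⊕ β => !w.isLeft) = Sum.isRight := by funext w; cases w <;> rfl
  rwa [hnot, countP_isLeft p.support, countP_isRight] at this

theorem exists_ends_perm_of_length_lefts_eq (hG : G ≤ completeBipartiteGraph α β)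
    (p : G.Walk u v) (hkl : p.lefts.length = p.rights.length) :
    ∃ x₀ y₀, [u, v] ~ [.inl x₀, .inr y₀] := by
  have := length_lefts_add_one hG p
  rcases u with x₀ | y₀ <;> rcases v with x₁ | y₁
  · simp [countP_cons] at this; omega
  · exact ⟨x₀, y₁, .rfl⟩
  · exact ⟨x₁, y₀, .swap _ _ _⟩
  · simp at this; omega

section Separated

variable {P : α → Bool} {Q : β → Bool}

theorem countP_add_one_le_of_separated (hG : G ≤ completeBipartiteGraph α β)
    (hPQ : ∀ x y, P x → Q y → ¬G.Adj (.inl x) (.inr y))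
    (p : G.Walk u v) {a : α} {b : β} (ha : .inl a ∈ p.support) (hPa : P a)
    (hb : .inr b ∈ p.support) (hQb : Q b) :
    p.lefts.countP P + p.rights.countP Q + 1 ≤
        p.lefts.length + [u, v].countP (Sum.elim (fun _ => false) Q) ∧
      p.lefts.countP P + p.rights.countP Q + 1 ≤
        p.rights.length + [u, v].countP (Sum.elim P fun _ => false) := by
  have hI : ∀ ⦃v w⦄, G.Adj v w → Sum.elim P Q v = true → Sum.elim P Q w = true → False := by
    rintro (x | y) (x' | y') h hv hw
    · exact isLeft_ne_of_adj hG h rfl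
    · exact hPQ x y' hv hw h
    · exact hPQ x' y hw hv h.symm
    · exact isLeft_ne_of_adj hG h rfl
  have hcount := countP_sumElim p.support P Q
  constructor
  · have := countP_support_add_one_le (isLeft_ne_of_adj hG) hI p ⟨_, hb, hQb, rfl⟩
    have he : (fun w => Sum.elim P Q w && !w.isLeft) =
        (Sum.elim (fun _ => false) Q : α ⊕ β → Bool) := by
      funext w; cases w <;> simp
    rwa [he, hcount, countP_isLeft] at this
  · have := countP_support_add_one_le (isRight_ne_of_adj hG) hI p ⟨_, ha, hPa, rfl⟩
    have he : (fun w => Sum.elim P Q w && !w.isRight) =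
        (Sum.elim P fun _ => false : α ⊕ β → Bool) := by
      funext w; cases w <;> simp
    rwa [he, hcount, countP_isRight] at this

theorem two_mul_countP_le_of_separated (hG : G ≤ completeBipartiteGraph α β)
    (hPQ : ∀ x y, P x → Q y → ¬G.Adj (.inl x) (.inr y))
    (p : G.Walk u v) {a : α} {b : β} (ha : .inl a ∈ p.support) (hPa : P a)
    (hb : .inr b ∈ p.support) (hQb : Q b) :
    2 * (p.lefts.countP P + p.rights.countP Q) ≤ p.lefts.length + p.rights.length := by
  obtain ⟨h₁, h₂⟩ := countP_add_one_le_of_separated hG hPQ p ha hPa hb hQb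
  have h₃ : [u, v].countP (Sum.elim (fun _ => false) Q) ≤ [u, v].countP Sum.isRight :=
    countP_mono_left (by rintro (_ | _) <;> simp)
  have h₄ : [u, v].countP (Sum.elim P fun _ => false) ≤ [u, v].countP Sum.isLeft :=
    countP_mono_left (by rintro (_ | _) <;> simp)
  have h₅ : [u, v].countP Sum.isLeft + [u, v].countP Sum.isRight = 2 := by
    cases u <;> cases v <;> simp [countP_cons]
  omega

theorem ends_of_separated (hG : G ≤ completeBipartiteGraph α β)
    (hPQ : ∀ x y, P x → Q y → ¬G.Adj (.inl x) (.inr y))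
    (p : G.Walk u v) {x₀ : α} {y₀ : β} (hends : [u, v] ~ [.inl x₀, .inr y₀])
    {a : α} {b : β} (ha : .inl a ∈ p.support) (hPa : P a) (hb : .inr b ∈ p.support) (hQb : Q b)
    (hkl : p.lefts.length = p.rights.length)
    (hcount : p.lefts.length ≤ p.lefts.countP P + p.rights.countP Q) : P x₀ ∧ Q y₀ := by
  obtain ⟨h₁, h₂⟩ := countP_add_one_le_of_separated hG hPQ p ha hPa hb hQb
  rw [hends.countP_eq] at h₁ h₂
  constructor
  · by_contra h; simp [h] at h₂; omega
  · by_contra h; simp [h] at h₁; omega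

end Separated

end SimpleGraph.Walk

end Bipartite

section Ordered

variable {α β : Type*} {G : SimpleGraph (α ⊕ β)}

def IsBoxClosed [LinearOrder α] [LinearOrder β] (G : SimpleGraph (α ⊕ β)) : Prop :=
  ∀ ⦃x x' a : α⦄ ⦃y y' b : β⦄, G.Adj (.inl x) (.inr y) → G.Adj (.inl x') (.inr y') →
    x' ≤ a → a ≤ x → y ≤ b → b ≤ y' → G.Adj (.inl a) (.inr b)

namespace SimpleGraph.Walk

variable {u v : α ⊕ β} {p : G.Walk u v}

def sortedLefts [LinearOrder α] (p : G.Walk u v) : List α := p.lefts.mergeSort (· ≤ ·)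

def sortedRights [LinearOrder β] (p : G.Walk u v) : List β := p.rights.mergeSort (· ≤ ·)

theorem sortedLefts_perm [LinearOrder α] : p.sortedLefts ~ p.lefts := mergeSort_perm _ _

theorem sortedRights_perm [LinearOrder β] : p.sortedRights ~ p.rights := mergeSort_perm _ _

theorem mem_sortedLefts [LinearOrder α] {x : α} : x ∈ p.sortedLefts ↔ .inl x ∈ p.support :=
  sortedLefts_perm.mem_iff.trans mem_lefts

theorem mem_sortedRights [LinearOrder β] {y : β} : y ∈ p.sortedRights ↔ .inr y ∈ p.support :=
  sortedRights_perm.mem_iff.trans mem_rights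

namespace IsPath

theorem pairwise_sortedLefts [LinearOrder α] (hp : p.IsPath) :
    p.sortedLefts.Pairwise (· < ·) :=
  pairwise_lt_mergeSort hp.nodup_lefts

theorem pairwise_sortedRights [LinearOrder β] (hp : p.IsPath) :
    p.sortedRights.Pairwise (· < ·) :=
  pairwise_lt_mergeSort hp.nodup_rights

theorem countP_le_lefts_eq [LinearOrder α] (hp : p.IsPath) {x : α} (hx : .inl x ∈ p.support) :
    p.lefts.countP (· ≤ x) = p.lefts.countP (· < x) + 1 := by
  rw [countP_le_eq_countP_lt_add_count, count_eq_one_of_mem hp.nodup_lefts (mem_lefts.2 hx)]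

theorem countP_le_rights_eq [LinearOrder β] (hp : p.IsPath) {y : β} (hy : .inr y ∈ p.support) :
    p.rights.countP (· ≤ y) = p.rights.countP (· < y) + 1 := by
  rw [countP_le_eq_countP_lt_add_count, count_eq_one_of_mem hp.nodup_rights (mem_rights.2 hy)]

variable [LinearOrder α] [LinearOrder β]

-- Otherwise `{x' ≥ x} ∪ {y' ≤ y}` would be an independent set too large for the path.
theorem exists_adj_ge_le (hG : G ≤ completeBipartiteGraph α β) (hp : p.IsPath) {x : α} {y : β}
    (hx : .inl x ∈ p.support) (hy : .inr y ∈ p.support)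
    (h : p.rights.length + 2 * p.lefts.countP (· < x) ≤
      p.lefts.length + 2 * p.rights.countP (· < y) + 1) :
    ∃ x' y', x ≤ x' ∧ y' ≤ y ∧ G.Adj (.inl x') (.inr y') := by
  by_contra! hno
  have := two_mul_countP_le_of_separated hG (P := (x ≤ ·)) (Q := (· ≤ y))
    (fun x' y' hx' hy' => hno x' y' (by simpa using hx') (by simpa using hy')) p hx (by simp) hy
    (by simp)
  have := p.lefts.countP_lt_add_countP_le x
  have := hp.countP_le_rights_eq hy
  omega

theorem exists_adj_le_ge (hG : G ≤ completeBipartiteGraph α β) (hp : p.IsPath) {x : α} {y : β}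
    (hx : .inl x ∈ p.support) (hy : .inr y ∈ p.support)
    (h : p.lefts.length + 2 * p.rights.countP (· < y) ≤
      p.rights.length + 2 * p.lefts.countP (· < x) + 1) :
    ∃ x' y', x' ≤ x ∧ y ≤ y' ∧ G.Adj (.inl x') (.inr y') := by
  by_contra! hno
  have := two_mul_countP_le_of_separated hG (P := (· ≤ x)) (Q := (y ≤ ·))
    (fun x' y' hx' hy' => hno x' y' (by simpa using hx') (by simpa using hy')) p hx (by simp) hy
    (by simp)
  have := p.rights.countP_lt_add_countP_le y
  have := hp.countP_le_lefts_eq hx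
  omega

theorem adj_of_rank (hG : G ≤ completeBipartiteGraph α β) (hbox : IsBoxClosed G)
    (hp : p.IsPath) {x : α} {y : β} (hx : .inl x ∈ p.support) (hy : .inr y ∈ p.support)
    (h₁ : p.rights.length + 2 * p.lefts.countP (· < x) ≤
      p.lefts.length + 2 * p.rights.countP (· < y) + 1)
    (h₂ : p.lefts.length + 2 * p.rights.countP (· < y) ≤
      p.rights.length + 2 * p.lefts.countP (· < x) + 1) :
    G.Adj (.inl x) (.inr y) := by
  obtain ⟨x₁, y₁, hx₁, hy₁, hxy₁⟩ := hp.exists_adj_ge_le hG hx hy h₁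
  obtain ⟨x₂, y₂, hx₂, hy₂, hxy₂⟩ := hp.exists_adj_le_ge hG hx hy h₂
  exact hbox hxy₁ hxy₂ hx₂ hx₁ hy₁ hy₂

/-- If both pairs fail, the `X`-endpoint `x₀` and the `Y`-endpoint `y₀` of the path satisfy
`x ≤ x₀ ≤ x'` and `y' ≤ y₀ ≤ y`, which the ranks of `x, y, x', y'` forbid. -/
theorem adj_or_adj_of_length_lefts_eq (hG : G ≤ completeBipartiteGraph α β)
    (hbox : IsBoxClosed G) (hp : p.IsPath) (hkl : p.lefts.length = p.rights.length)
    {x x' : α} {y y' : β} (hx : .inl x ∈ p.support) (hy : .inr y ∈ p.support)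
    (hx' : .inl x' ∈ p.support) (hy' : .inr y' ∈ p.support)
    (h : p.lefts.countP (· < x) = p.rights.countP (· < y) + 1)
    (h' : p.rights.countP (· < y') = p.lefts.countP (· < x') + 1) :
    G.Adj (.inl x) (.inr y) ∨ G.Adj (.inl x') (.inr y') := by
  by_contra! hno
  obtain ⟨x₀, y₀, hends⟩ := exists_ends_perm_of_length_lefts_eq hG p hkl
  have hD : ∀ x₁ y₁, x ≤ x₁ → y₁ ≤ y → ¬G.Adj (.inl x₁) (.inr y₁) := by
    intro x₁ y₁ hx₁ hy₁ hxy₁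
    obtain ⟨x₂, y₂, hx₂, hy₂, hxy₂⟩ := hp.exists_adj_le_ge hG hx hy (by omega)
    exact hno.1 (hbox hxy₁ hxy₂ hx₂ hx₁ hy₁ hy₂)
  have hU : ∀ x₂ y₂, x₂ ≤ x' → y' ≤ y₂ → ¬G.Adj (.inl x₂) (.inr y₂) := by
    intro x₂ y₂ hx₂ hy₂ hxy₂
    obtain ⟨x₁, y₁, hx₁, hy₁, hxy₁⟩ := hp.exists_adj_ge_le hG hx' hy' (by omega)
    exact hno.2 (hbox hxy₁ hxy₂ hx₂ hx₁ hy₁ hy₂)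
  have := p.lefts.countP_lt_add_countP_le x
  have := hp.countP_le_rights_eq hy
  have := p.rights.countP_lt_add_countP_le y'
  have := hp.countP_le_lefts_eq hx'
  obtain ⟨hx₀, hy₀⟩ := ends_of_separated hG (P := (x ≤ ·)) (Q := (· ≤ y))
    (fun x₁ y₁ hx₁ hy₁ => hD x₁ y₁ (by simpa using hx₁) (by simpa using hy₁)) p hends hx
    (by simp) hy (by simp) hkl (by omega)
  obtain ⟨hx₀', hy₀'⟩ := ends_of_separated hG (P := (· ≤ x')) (Q := (y' ≤ ·))
    (fun x₂ y₂ hx₂ hy₂ => hU x₂ y₂ (by simpa using hx₂) (by simpa using hy₂)) p hends hx'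
    (by simp) hy' (by simp) hkl (by omega)
  simp only [decide_eq_true_eq] at hx₀ hy₀ hx₀' hy₀'
  have : p.lefts.countP (· < x) ≤ p.lefts.countP (· < x') := countP_mono_left
    fun z _ hz => by simpa using lt_of_lt_of_le (by simpa using hz) (hx₀.trans hx₀')
  have : p.rights.countP (· < y') ≤ p.rights.countP (· < y) := countP_mono_left
    fun z _ hz => by simpa using lt_of_lt_of_le (by simpa using hz) (hy₀'.trans hy₀)
  omega

theorem countP_lt_eq_of_mem_zip_sorted (hp : p.IsPath) {x : α} {y : β}
    (h : (x, y) ∈ zip p.sortedLefts p.sortedRights) :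
    p.lefts.countP (· < x) = p.rights.countP (· < y) := by
  rw [← sortedLefts_perm.countP_eq, ← sortedRights_perm.countP_eq]
  exact countP_lt_eq_of_mem_zip hp.pairwise_sortedLefts hp.pairwise_sortedRights h

theorem countP_lt_eq_add_one_of_mem_zip_sortedLefts_tail (hp : p.IsPath) {x : α} {y : β}
    (h : (y, x) ∈ zip p.sortedRights p.sortedLefts.tail) :
    p.lefts.countP (· < x) = p.rights.countP (· < y) + 1 := by
  rw [← sortedLefts_perm.countP_eq, ← sortedRights_perm.countP_eq]
  exact countP_lt_eq_add_one_of_mem_zip_tail hp.pairwise_sortedRights hp.pairwise_sortedLefts h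

theorem countP_lt_eq_add_one_of_mem_zip_sortedRights_tail (hp : p.IsPath) {x : α} {y : β}
    (h : (x, y) ∈ zip p.sortedLefts p.sortedRights.tail) :
    p.rights.countP (· < y) = p.lefts.countP (· < x) + 1 := by
  rw [← sortedLefts_perm.countP_eq, ← sortedRights_perm.countP_eq]
  exact countP_lt_eq_add_one_of_mem_zip_tail hp.pairwise_sortedLefts hp.pairwise_sortedRights h

theorem adj_of_mem_zip_sorted (hG : G ≤ completeBipartiteGraph α β) (hbox : IsBoxClosed G)
    (hp : p.IsPath) {x : α} {y : β} (h : (x, y) ∈ zip p.sortedLefts p.sortedRights) :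
    G.Adj (.inl x) (.inr y) := by
  have := hp.countP_lt_eq_of_mem_zip_sorted h
  have := length_lefts_add_one hG p
  have : [u, v].countP Sum.isLeft ≤ 2 := countP_le_length
  exact hp.adj_of_rank hG hbox (mem_sortedLefts.1 (of_mem_zip h).1)
    (mem_sortedRights.1 (of_mem_zip h).2) (by omega) (by omega)

theorem adj_of_mem_zip_sorted_tail_or (hG : G ≤ completeBipartiteGraph α β)
    (hbox : IsBoxClosed G) (hp : p.IsPath) :
    (p.sortedRights.length ≤ p.sortedLefts.length ∧
      p.sortedLefts.length ≤ p.sortedRights.length + 1 ∧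
      ∀ y x, (y, x) ∈ zip p.sortedRights p.sortedLefts.tail → G.Adj (.inl x) (.inr y)) ∨
    (p.sortedLefts.length ≤ p.sortedRights.length ∧
      p.sortedRights.length ≤ p.sortedLefts.length + 1 ∧
      ∀ x y, (x, y) ∈ zip p.sortedLefts p.sortedRights.tail → G.Adj (.inl x) (.inr y)) := by
  rw [sortedLefts_perm.length_eq, sortedRights_perm.length_eq]
  have := length_lefts_add_one hG p
  have : [u, v].countP Sum.isLeft ≤ 2 := countP_le_length
  have hYX {y x} (h : (y, x) ∈ zip p.sortedRights p.sortedLefts.tail) :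
      .inl x ∈ p.support ∧ .inr y ∈ p.support :=
    ⟨mem_sortedLefts.1 (mem_of_mem_tail (of_mem_zip h).2), mem_sortedRights.1 (of_mem_zip h).1⟩
  have hXY {x y} (h : (x, y) ∈ zip p.sortedLefts p.sortedRights.tail) :
      .inl x ∈ p.support ∧ .inr y ∈ p.support :=
    ⟨mem_sortedLefts.1 (of_mem_zip h).1, mem_sortedRights.1 (mem_of_mem_tail (of_mem_zip h).2)⟩
  rcases (by omega : p.lefts.length = p.rights.length + 1 ∨
      p.rights.length = p.lefts.length + 1 ∨ p.lefts.length = p.rights.length)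
    with hkl | hkl | hkl
  · refine .inl ⟨by omega, by omega, fun y x h => ?_⟩
    have := hp.countP_lt_eq_add_one_of_mem_zip_sortedLefts_tail h
    exact hp.adj_of_rank hG hbox (hYX h).1 (hYX h).2 (by omega) (by omega)
  · refine .inr ⟨by omega, by omega, fun x y h => ?_⟩
    have := hp.countP_lt_eq_add_one_of_mem_zip_sortedRights_tail h
    exact hp.adj_of_rank hG hbox (hXY h).1 (hXY h).2 (by omega) (by omega)
  · by_cases hX : ∀ y x, (y, x) ∈ zip p.sortedRights p.sortedLefts.tail →
        G.Adj (.inl x) (.inr y)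
    · exact .inl ⟨by omega, by omega, hX⟩
    push Not at hX
    obtain ⟨y', x', h', hnot⟩ := hX
    refine .inr ⟨by omega, by omega, fun x y h => ?_⟩
    exact (hp.adj_or_adj_of_length_lefts_eq hG hbox hkl (hYX h').1 (hYX h').2 (hXY h).1
      (hXY h).2 (hp.countP_lt_eq_add_one_of_mem_zip_sortedLefts_tail h')
      (hp.countP_lt_eq_add_one_of_mem_zip_sortedRights_tail h)).resolve_left hnot

theorem exists_isPath_sorted (hG : G ≤ completeBipartiteGraph α β) (hbox : IsBoxClosed G)
    (hp : p.IsPath) :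
    ∃ (a b : α ⊕ β) (q : G.Walk a b), q.IsPath ∧ q.lefts.Pairwise (· < ·) ∧
      q.rights.Pairwise (· < ·) ∧ ∀ w, w ∈ q.support ↔ w ∈ p.support := by
  obtain ⟨C, hC, hperm, hl, hr⟩ := exists_isChain_interleave
    (fun _ _ => hp.adj_of_mem_zip_sorted hG hbox) (hp.adj_of_mem_zip_sorted_tail_or hG hbox)
  have hmem : ∀ w, w ∈ C ↔ w ∈ p.support := by
    intro w
    rw [hperm.mem_iff]
    cases w <;> simp [mem_sortedLefts, mem_sortedRights]
  have hnd : C.Nodup := hperm.nodup_iff.2 <| nodup_append.2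
    ⟨hp.pairwise_sortedLefts.nodup.map Sum.inl_injective,
      hp.pairwise_sortedRights.nodup.map Sum.inr_injective, by simp⟩
  refine ⟨_, _, ofSupport C (ne_nil_of_mem ((hmem u).2 p.start_mem_support)) hC, ?_, ?_, ?_, ?_⟩
  · rwa [isPath_def, support_ofSupport]
  · rw [lefts, support_ofSupport, hl]; exact hp.pairwise_sortedLefts
  · rw [rights, support_ofSupport, hr]; exact hp.pairwise_sortedRights
  · simpa using hmem

end IsPath

end SimpleGraph.Walk

end Ordered

section LineRep

variable {n m : ℕ} {G : SimpleGraph (Fin n ⊕ Fin m)}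

theorem LineRep.le_completeBipartiteGraph (rep : LineRep n m G) :
    G ≤ completeBipartiteGraph (Fin n) (Fin m) := by
  rintro (i | j) (i' | j') h
  · exact absurd h (rep.no_left i i')
  · simp [completeBipartiteGraph]
  · simp [completeBipartiteGraph]
  · exact absurd h (rep.no_right j j')

theorem LineRep.isBoxClosed (rep : LineRep n m G) : IsBoxClosed G := by
  intro x x' a y y' b h h' hx' hx hy hy'
  rw [rep.adj_iff, mul_neg_iff] at h h' ⊢
  have := rep.r_mono.monotone hx'
  have := rep.r_mono.monotone hx
  have := rep.σr_mono.monotone hx'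
  have := rep.σr_mono.monotone hx
  have := rep.s_mono.monotone hy
  have := rep.s_mono.monotone hy'
  have := rep.σs_mono.monotone hy
  have := rep.σs_mono.monotone hy'
  rcases h with ⟨h₁, h₂⟩ | ⟨h₁, h₂⟩ <;> rcases h' with ⟨h₃, h₄⟩ | ⟨h₃, h₄⟩
  · exact .inl ⟨by linarith, by linarith⟩
  · exfalso; linarith
  · exfalso; linarith
  · exact .inr ⟨by linarith, by linarith⟩

end LineRep

/-- In a finite bipartite permutation graph, every path can be reordered: for every path
`p` there is an ordered path `q` with the same vertex set. -/
theorem exists_ordered_path_same_support {n m : ℕ} (G : SimpleGraph (Fin n ⊕ Fin m))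
    (rep : LineRep n m G) ⦃u v : Fin n ⊕ Fin m⦄ (p : G.Walk u v) (hp : p.IsPath) :
    ∃ (a b : Fin n ⊕ Fin m) (q : G.Walk a b), q.IsPath ∧ OrderedWalk G q ∧
      ∀ x : Fin n ⊕ Fin m, x ∈ q.support ↔ x ∈ p.support := by
  have hG := rep.le_completeBipartiteGraph
  obtain ⟨a, b, q, hq, hl, hr, hsupp⟩ := hp.exists_isPath_sorted hG rep.isBoxClosed
  exact ⟨a, b, q, hq, ⟨q.isChain_adj_support.imp (isLeft_ne_of_adj hG), hl, hr⟩, hsupp⟩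
end
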